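/- Let n ≥ 3 and m ≥ 1 be integers, r > 0, ρ, λ_F ∈ ℝ, let ε_1,…,ε_n ∈ {−1,1} and α = (α_1,…,α_n) ∈ ℝⁿ with α ≠ 0 and Σ_{i=1}^n ε_i α_i² = 0. Let F, Φ, H : ℝ → ℝ be smooth positive functions and define f, φ, h : ℝⁿ → ℝ by f(x) = F(Σ_i α_i x_i), φ(x) = Φ(Σ_i α_i x_i), h(x) = H(Σ_i α_i x_i). Then the three families of equations (i) for all i ≠ j, (n−2)fh·φ_{x_ix_j} − rfφ·h_{x_ix_j} − mhφ·f_{x_ix_j} − mh·φ_{x_i}f_{x_j} − mh·φ_{x_j}f_{x_i} − rf·φ_{x_i}h_{x_j} − rf·φ_{x_j}h_{x_i} = 0; (ii) for all i, φ·[(n−2)fh·φ_{x_ix_i} − rfφ·h_{x_ix_i} − mhφ·f_{x_ix_i} − 2mh·φ_{x_i}f_{x_i} − 2rf·φ_{x_i}h_{x_i}] + ε_i Σ_{k=1}^n ε_k [fhφ·φ_{x_kx_k} − (n−1)fh(φ_{x_k})² + mhφ·φ_{x_k}f_{x_k} + rfφ·φ_{x_k}h_{x_k}] = ε_i ρ f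 h; (iii) Σ_{k=1}^n ε_k [−fhφ²·f_{x_kx_k} + (n−2)fhφ·φ_{x_k}f_{x_k} − (m−1)hφ²(f_{x_k})² − rfφ²·f_{x_k}h_{x_k}] = h(ρf² − λ_F) hold at every x ∈ ℝⁿ if and only if ρ = 0, λ_F = 0, and for every ξ ∈ ℝ, (n−2)FHΦ'' − rFΦH'' − mHΦF'' − 2mHΦ'F' − 2rFΦ'H' = 0. -/

import Mathlib

open scoped ContDiff


/-- First partial derivative of `u : ℝⁿ → ℝ` in the `i`-th coordinate direction. -/
noncomputable def pd {n : ℕ} (u : (Fin n → ℝ) → ℝ) (i : Fin n) (x : Fin n → ℝ) : ℝ :=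
  fderiv ℝ u x (Pi.single i 1)

/-- Second partial derivative `u_{x_i x_j}`. -/
noncomputable def pd2 {n : ℕ} (u : (Fin n → ℝ) → ℝ) (i j : Fin n) (x : Fin n → ℝ) : ℝ :=
  pd (fun y => pd u j y) i x

noncomputable def lmap {n : ℕ} (α : Fin n → ℝ) : (Fin n → ℝ) →L[ℝ] ℝ :=
  ∑ k, (α k) • (ContinuousLinearMap.proj k : (Fin n → ℝ) →L[ℝ] ℝ)

lemma lmap_apply {n : ℕ} (α : Fin n → ℝ) (x : Fin n → ℝ) : lmap α x = ∑ k, α k * x k := by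
  simp [lmap]

lemma lmap_single {n : ℕ} (α : Fin n → ℝ) (i : Fin n) : lmap α (Pi.single i 1) = α i := by
  rw [lmap_apply]
  simp [Pi.single_apply]

lemma hasFDerivAt_lmap {n : ℕ} (α : Fin n → ℝ) (x : Fin n → ℝ) :
    HasFDerivAt (fun y : Fin n → ℝ => ∑ k, α k * y k) (lmap α) x := by
  have := (lmap α).hasFDerivAt (x := x)
  have he : (fun y : Fin n → ℝ => ∑ k, α k * y k) = fun y => lmap α y := by
    funext y; rw [lmap_apply]
  rw [he]
  exact this

lemma pd_comp {n : ℕ} (α : Fin n → ℝ) (G : ℝ → ℝ) (hG : Differentiable ℝ G) (i : Fin n)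
    (x : Fin n → ℝ) :
    pd (fun y => G (∑ k, α k * y k)) i x = α i * deriv G (∑ k, α k * x k) := by
  have hGd : HasDerivAt G (deriv G (∑ k, α k * x k)) (∑ k, α k * x k) :=
    (hG _).hasDerivAt
  have h2 : HasFDerivAt (fun y => G (∑ k, α k * y k))
      (deriv G (∑ k, α k * x k) • lmap α) x :=
    hGd.comp_hasFDerivAt x (hasFDerivAt_lmap α x)
  rw [pd, h2.fderiv]
  simp [lmap_single, mul_comm]

lemma pd2_comp {n : ℕ} (α : Fin n → ℝ) (G : ℝ → ℝ) (hG : ContDiff ℝ (⊤ : ℕ∞) G) (i j : Fin n)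
    (x : Fin n → ℝ) :
    pd2 (fun y => G (∑ k, α k * y k)) i j x
      = α i * α j * deriv (deriv G) (∑ k, α k * x k) := by
  have hG' : ContDiff ℝ (∞ : WithTop ℕ∞) (deriv G) :=
    (contDiff_infty_iff_deriv.mp (hG.of_le (by simp))).2
  have he : (fun y => pd (fun z => G (∑ k, α k * z k)) j y)
      = fun y => (fun t => α j * deriv G t) (∑ k, α k * y k) := by
    funext y
    exact pd_comp α G (hG.differentiable (by simp)) j y
  rw [pd2, he, pd_comp α (fun t => α j * deriv G t)
      ((hG'.differentiable (by norm_num)).const_mul _) i x,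
    deriv_const_mul _ (hG'.differentiable (by norm_num) _)]
  ring

noncomputable def Eode (n m : ℕ) (r : ℝ) (F Φ H : ℝ → ℝ) (ξ : ℝ) : ℝ :=
  (n - 2 : ℝ) * F ξ * H ξ * deriv (deriv Φ) ξ - r * F ξ * Φ ξ * deriv (deriv H) ξ
    - m * H ξ * Φ ξ * deriv (deriv F) ξ - 2 * m * H ξ * deriv Φ ξ * deriv F ξ
    - 2 * r * F ξ * deriv Φ ξ * deriv H ξ

/-- For translation-invariant data in a null direction `α ≠ 0` with
`Σ εᵢ αᵢ² = 0`, the quasi-Einstein PDE system holds at every point iff `ρ = 0`,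
`λ_F = 0`, and the single linear ODE holds for every `ξ ∈ ℝ`. -/
theorem stmt2 (n m : ℕ) (hn : 3 ≤ n) (hm : 1 ≤ m) (r ρ lamF : ℝ) (hr : 0 < r)
    (ε : Fin n → ℝ) (hε : ∀ i, ε i = 1 ∨ ε i = -1)
    (α : Fin n → ℝ) (hα : α ≠ 0)
    (hsum : ∑ i, ε i * (α i) ^ 2 = 0)
    (F Φ H : ℝ → ℝ)
    (hF : ContDiff ℝ (⊤ : ℕ∞) F) (hΦ : ContDiff ℝ (⊤ : ℕ∞) Φ) (hH : ContDiff ℝ (⊤ : ℕ∞) H)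
    (hFpos : ∀ t, 0 < F t) (hΦpos : ∀ t, 0 < Φ t) (hHpos : ∀ t, 0 < H t)
    (f φ h : (Fin n → ℝ) → ℝ)
    (hfdef : ∀ x, f x = F (∑ i, α i * x i))
    (hφdef : ∀ x, φ x = Φ (∑ i, α i * x i))
    (hhdef : ∀ x, h x = H (∑ i, α i * x i)) :
    ((∀ x : Fin n → ℝ, ∀ i j : Fin n, i ≠ j →
        (n - 2 : ℝ) * f x * h x * pd2 φ i j x - r * f x * φ x * pd2 h i j x
          - m * h x * φ x * pd2 f i j x - m * h x * pd φ i x * pd f j x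
          - m * h x * pd φ j x * pd f i x - r * f x * pd φ i x * pd h j x
          - r * f x * pd φ j x * pd h i x = 0) ∧
      (∀ x : Fin n → ℝ, ∀ i : Fin n,
        φ x * ((n - 2 : ℝ) * f x * h x * pd2 φ i i x - r * f x * φ x * pd2 h i i x
          - m * h x * φ x * pd2 f i i x - 2 * m * h x * pd φ i x * pd f i x
          - 2 * r * f x * pd φ i x * pd h i x)
        + ε i * ∑ k, ε k * (f x * h x * φ x * pd2 φ k k x
            - (n - 1 : ℝ) * f x * h x * (pd φ k x) ^ 2
            + m * h x * φ x * pd φ k x * pd f k x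
            + r * f x * φ x * pd φ k x * pd h k x)
        = ε i * ρ * f x * h x) ∧
      (∀ x : Fin n → ℝ,
        ∑ k, ε k * (-(f x) * h x * (φ x) ^ 2 * pd2 f k k x
            + (n - 2 : ℝ) * f x * h x * φ x * pd φ k x * pd f k x
            - (m - 1 : ℝ) * h x * (φ x) ^ 2 * (pd f k x) ^ 2
            - r * f x * (φ x) ^ 2 * pd f k x * pd h k x)
        = h x * (ρ * (f x) ^ 2 - lamF)))
    ↔
    (ρ = 0 ∧ lamF = 0 ∧
      ∀ ξ : ℝ,
        (n - 2 : ℝ) * F ξ * H ξ * deriv (deriv Φ) ξ - r * F ξ * Φ ξ * deriv (deriv H) ξ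
          - m * H ξ * Φ ξ * deriv (deriv F) ξ - 2 * m * H ξ * deriv Φ ξ * deriv F ξ
          - 2 * r * F ξ * deriv Φ ξ * deriv H ξ = 0) := by
  have hfe : f = fun x => F (∑ k, α k * x k) := funext hfdef
  have hφe : φ = fun x => Φ (∑ k, α k * x k) := funext hφdef
  have hhe : h = fun x => H (∑ k, α k * x k) := funext hhdef
  have pdf : ∀ (i : Fin n) (x), pd f i x = α i * deriv F (∑ k, α k * x k) := by
    intro i x; rw [hfe]; exact pd_comp α F (hF.differentiable (by simp)) i x
  have pdφ : ∀ (i : Fin n) (x), pd φ i x = α i * deriv Φ (∑ k, α k * x k) := by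
    intro i x; rw [hφe]; exact pd_comp α Φ (hΦ.differentiable (by simp)) i x
  have pdh : ∀ (i : Fin n) (x), pd h i x = α i * deriv H (∑ k, α k * x k) := by
    intro i x; rw [hhe]; exact pd_comp α H (hH.differentiable (by simp)) i x
  have pd2f : ∀ (i j : Fin n) (x), pd2 f i j x = α i * α j * deriv (deriv F) (∑ k, α k * x k) := by
    intro i j x; rw [hfe]; exact pd2_comp α F hF i j x
  have pd2φ : ∀ (i j : Fin n) (x), pd2 φ i j x = α i * α j * deriv (deriv Φ) (∑ k, α k * x k) := by
    intro i j x; rw [hφe]; exact pd2_comp α Φ hΦ i j x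
  have pd2h : ∀ (i j : Fin n) (x), pd2 h i j x = α i * α j * deriv (deriv H) (∑ k, α k * x k) := by
    intro i j x; rw [hhe]; exact pd2_comp α H hH i j x
  have hεne : ∀ i, ε i ≠ 0 := by
    intro i; rcases hε i with h' | h' <;> rw [h'] <;> norm_num
  have eq1 : ∀ (x : Fin n → ℝ) (i j : Fin n),
      (n - 2 : ℝ) * f x * h x * pd2 φ i j x - r * f x * φ x * pd2 h i j x
        - m * h x * φ x * pd2 f i j x - m * h x * pd φ i x * pd f j x
        - m * h x * pd φ j x * pd f i x - r * f x * pd φ i x * pd h j x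
        - r * f x * pd φ j x * pd h i x
      = α i * α j * Eode n m r F Φ H (∑ k, α k * x k) := by
    intro x i j
    simp only [pdf, pdφ, pdh, pd2f, pd2φ, pd2h, hfdef, hφdef, hhdef, Eode]
    ring
  have eq2 : ∀ (x : Fin n → ℝ) (i : Fin n),
      φ x * ((n - 2 : ℝ) * f x * h x * pd2 φ i i x - r * f x * φ x * pd2 h i i x
        - m * h x * φ x * pd2 f i i x - 2 * m * h x * pd φ i x * pd f i x
        - 2 * r * f x * pd φ i x * pd h i x)
      = Φ (∑ k, α k * x k) * (α i * α i) * Eode n m r F Φ H (∑ k, α k * x k) := by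
    intro x i
    simp only [pdf, pdφ, pdh, pd2f, pd2φ, pd2h, hfdef, hφdef, hhdef, Eode]
    ring
  have hsum2 : ∀ x : Fin n → ℝ,
      ∑ k, ε k * (f x * h x * φ x * pd2 φ k k x
        - (n - 1 : ℝ) * f x * h x * (pd φ k x) ^ 2
        + m * h x * φ x * pd φ k x * pd f k x
        + r * f x * φ x * pd φ k x * pd h k x) = 0 := by
    intro x
    have hc : ∀ k ∈ Finset.univ, ε k * (f x * h x * φ x * pd2 φ k k x
        - (n - 1 : ℝ) * f x * h x * (pd φ k x) ^ 2
        + m * h x * φ x * pd φ k x * pd f k x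
        + r * f x * φ x * pd φ k x * pd h k x)
        = ε k * α k ^ 2 *
          (F (∑ l, α l * x l) * H (∑ l, α l * x l) * Φ (∑ l, α l * x l)
              * deriv (deriv Φ) (∑ l, α l * x l)
            - (n - 1 : ℝ) * F (∑ l, α l * x l) * H (∑ l, α l * x l)
              * (deriv Φ (∑ l, α l * x l)) ^ 2
            + m * H (∑ l, α l * x l) * Φ (∑ l, α l * x l)
              * deriv Φ (∑ l, α l * x l) * deriv F (∑ l, α l * x l)
            + r * F (∑ l, α l * x l) * Φ (∑ l, α l * x l)
              * deriv Φ (∑ l, α l * x l) * deriv H (∑ l, α l * x l)) := by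
      intro k _
      simp only [pdf, pdφ, pdh, pd2φ, hfdef, hφdef, hhdef]
      ring
    rw [Finset.sum_congr rfl hc, ← Finset.sum_mul, hsum, zero_mul]
  have hsum3 : ∀ x : Fin n → ℝ,
      ∑ k, ε k * (-(f x) * h x * (φ x) ^ 2 * pd2 f k k x
        + (n - 2 : ℝ) * f x * h x * φ x * pd φ k x * pd f k x
        - (m - 1 : ℝ) * h x * (φ x) ^ 2 * (pd f k x) ^ 2
        - r * f x * (φ x) ^ 2 * pd f k x * pd h k x) = 0 := by
    intro x
    have hc : ∀ k ∈ Finset.univ, ε k * (-(f x) * h x * (φ x) ^ 2 * pd2 f k k x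
        + (n - 2 : ℝ) * f x * h x * φ x * pd φ k x * pd f k x
        - (m - 1 : ℝ) * h x * (φ x) ^ 2 * (pd f k x) ^ 2
        - r * f x * (φ x) ^ 2 * pd f k x * pd h k x)
        = ε k * α k ^ 2 *
          (-(F (∑ l, α l * x l)) * H (∑ l, α l * x l) * (Φ (∑ l, α l * x l)) ^ 2
              * deriv (deriv F) (∑ l, α l * x l)
            + (n - 2 : ℝ) * F (∑ l, α l * x l) * H (∑ l, α l * x l) * Φ (∑ l, α l * x l)
              * deriv Φ (∑ l, α l * x l) * deriv F (∑ l, α l * x l)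
            - (m - 1 : ℝ) * H (∑ l, α l * x l) * (Φ (∑ l, α l * x l)) ^ 2
              * (deriv F (∑ l, α l * x l)) ^ 2
            - r * F (∑ l, α l * x l) * (Φ (∑ l, α l * x l)) ^ 2
              * deriv F (∑ l, α l * x l) * deriv H (∑ l, α l * x l)) := by
      intro k _
      simp only [pdf, pdφ, pdh, pd2f, hfdef, hφdef, hhdef]
      ring
    rw [Finset.sum_congr rfl hc, ← Finset.sum_mul, hsum, zero_mul]
  constructor
  · rintro ⟨h1, h2, h3⟩
    obtain ⟨i0, hi0⟩ : ∃ i, α i ≠ 0 := by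
      by_contra hc; push_neg at hc; exact hα (funext hc)
    obtain ⟨j0, hj0ne, hj0⟩ : ∃ j, j ≠ i0 ∧ α j ≠ 0 := by
      by_contra hc; push_neg at hc
      have hone : ∑ k, ε k * α k ^ 2 = ε i0 * α i0 ^ 2 :=
        Finset.sum_eq_single i0 (fun b _ hb => by rw [hc b hb]; ring)
          (fun hni => absurd (Finset.mem_univ i0) hni)
      rw [hone] at hsum
      exact (mul_ne_zero (hεne i0) (pow_ne_zero 2 hi0)) hsum
    have hsurj : ∀ ξ : ℝ, ∃ x : Fin n → ℝ, ∑ k, α k * x k = ξ := by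
      intro ξ
      refine ⟨Pi.single i0 (ξ / α i0), ?_⟩
      rw [Finset.sum_eq_single i0 (fun b _ hb => by simp [Pi.single_eq_of_ne hb])
        (fun hni => absurd (Finset.mem_univ i0) hni)]
      rw [Pi.single_eq_same]
      field_simp
    have hE : ∀ ξ, Eode n m r F Φ H ξ = 0 := by
      intro ξ
      obtain ⟨x, hx⟩ := hsurj ξ
      have h1' := h1 x j0 i0 hj0ne
      rw [eq1 x j0 i0, hx] at h1'
      rcases mul_eq_zero.mp h1' with h' | h'
      · exact absurd h' (mul_ne_zero hj0 hi0)
      · exact h'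
    have hρ : ρ = 0 := by
      obtain ⟨x, hx⟩ := hsurj 0
      have h2' := h2 x i0
      rw [hsum2 x, mul_zero, add_zero, eq2 x i0, hE, mul_zero] at h2'
      have hfx : 0 < f x := by rw [hfdef]; exact hFpos _
      have hhx : 0 < h x := by rw [hhdef]; exact hHpos _
      have h'' : ε i0 * (f x * h x) * ρ = 0 := by linear_combination -h2'
      rcases mul_eq_zero.mp h'' with h' | h'
      · exact absurd h' (mul_ne_zero (hεne i0) (ne_of_gt (mul_pos hfx hhx)))
      · exact h'
    have hlam : lamF = 0 := by
      obtain ⟨x, hx⟩ := hsurj 0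
      have h3' := h3 x
      rw [hsum3 x] at h3'
      have hhx : 0 < h x := by rw [hhdef]; exact hHpos _
      have h'' : h x * lamF = 0 := by linear_combination h3' + h x * (f x) ^ 2 * hρ
      rcases mul_eq_zero.mp h'' with h' | h'
      · exact absurd h' (ne_of_gt hhx)
      · exact h'
    exact ⟨hρ, hlam, fun ξ => hE ξ⟩
  · rintro ⟨hρ, hlam, hODE⟩
    have hE : ∀ ξ, Eode n m r F Φ H ξ = 0 := hODE
    refine ⟨?_, ?_, ?_⟩
    · intro x i j _
      rw [eq1 x i j, hE, mul_zero]
    · intro x i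
      rw [hsum2 x, mul_zero, add_zero, eq2 x i, hE, mul_zero, hρ]
      ring
    · intro x
      rw [hsum3 x, hρ, hlam]
      ring
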